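/- arXiv:2602.01281 — 8 statements merged into one kernel-verified Lean document; each statement's English description precedes it below -/
import Mathlib

section
/- If a partition into distinct parts is refinable, then it admits a refinement in which some part is replaced by exactly two missing parts. Equivalently: a partition λ = (λ₁ < λ₂ < ... < λ_t) of N into distinct parts is refinable if and only if there exist two distinct missing parts μ_i < μ_j (positive integers less than λ_t not occurring in λ) such that μ_i + μ_j equals some part λ_ℓ of λ. -/
/-- A partition into distinct parts, encoded as a `Finset ℕ` of its parts, is *refinable*
if some part can be replaced by two or more distinct positive integers, none of which is
already a part, summing to it. -/
def Refinable (P : Finset ℕ) : Prop :=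
  ∃ a ∈ P, ∃ B : Finset ℕ, 2 ≤ B.card ∧ (∀ b ∈ B, 0 < b ∧ b ∉ P) ∧ B.sum id = a

lemma key (P : Finset ℕ) : ∀ n : ℕ, ∀ B : Finset ℕ, B.card = n → 2 ≤ B.card →
    (∀ b ∈ B, 0 < b ∧ b ∉ P) → B.sum id ∈ P →
    ∃ μi μj : ℕ, μi < μj ∧ 0 < μi ∧ μi ∉ P ∧ μj ∉ P ∧ μi + μj ∈ P := by
  intro n
  induction n using Nat.strong_induction_on with
  | _ n ih =>
    intro B hcard h2 hb hsum
    have hBne : B.Nonempty := Finset.card_pos.mp (by omega)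
    set x := B.max' hBne with hx
    have hxB : x ∈ B := B.max'_mem hBne
    have herne : (B.erase x).Nonempty := by
      rw [← Finset.card_pos, Finset.card_erase_of_mem hxB]; omega
    set y := (B.erase x).max' herne with hy
    have hyBe : y ∈ B.erase x := Finset.max'_mem _ herne
    have hyB : y ∈ B := Finset.mem_of_mem_erase hyBe
    have hyx : y < x := lt_of_le_of_ne (B.le_max' y hyB) (Finset.ne_of_mem_erase hyBe)
    have hypos : 0 < y := (hb y hyB).1
    have hsum1 : B.sum id = x + (B.erase x).sum id := (Finset.add_sum_erase B id hxB).symm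
    have hsum2 : (B.erase x).sum id = y + ((B.erase x).erase y).sum id :=
      (Finset.add_sum_erase _ id hyBe).symm
    by_cases hcase : y + x ∈ P
    · exact ⟨y, x, hyx, hypos, (hb y hyB).2, (hb x hxB).2, hcase⟩
    · set C := (B.erase x).erase y with hC
      have hxyC : x + y ∉ C := by
        intro h
        have := B.le_max' (x + y) (Finset.mem_of_mem_erase (Finset.mem_of_mem_erase h))
        omega
      have hCcard : C.card = n - 2 := by
        rw [hC, Finset.card_erase_of_mem hyBe, Finset.card_erase_of_mem hxB]; omega
      have hn3 : 3 ≤ n := by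
        by_contra h
        have hCe : C = ∅ := Finset.card_eq_zero.mp (by omega)
        rw [hsum1, hsum2, hCe] at hsum
        simp only [Finset.sum_empty, Nat.add_zero] at hsum
        exact hcase (by rwa [Nat.add_comm] at hsum)
      have hB'card : (insert (x + y) C).card = n - 1 := by
        rw [Finset.card_insert_of_notMem hxyC]; omega
      have hB'sum : (insert (x + y) C).sum id ∈ P := by
        have : (insert (x + y) C).sum id = B.sum id := by
          rw [Finset.sum_insert hxyC, hsum1, hsum2]
          simp only [id_eq]; ring
        rwa [this]
      refine ih (n - 1) (by omega) (insert (x + y) C) hB'card (by omega) ?_ hB'sum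
      intro b hbmem
      rcases Finset.mem_insert.mp hbmem with h | h
      · subst h
        exact ⟨by omega, by rwa [Nat.add_comm] at hcase⟩
      · exact hb b (Finset.mem_of_mem_erase (Finset.mem_of_mem_erase h))

/-- A partition into distinct parts is refinable iff some part is the sum of two
distinct missing parts. -/
theorem stmt0 (N : ℕ) (P : Finset ℕ) (hne : P.Nonempty)
    (hpos : ∀ p ∈ P, 0 < p) (hcard : 2 ≤ P.card) (hsum : P.sum id = N) :
    Refinable P ↔
      ∃ μi μj : ℕ, μi < μj ∧ 0 < μi ∧ μj < P.max' hne ∧ μi ∉ P ∧ μj ∉ P ∧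
        μi + μj ∈ P := by
  constructor
  · rintro ⟨a, haP, B, hB2, hb, hBsum⟩
    obtain ⟨μi, μj, h1, h2, h3, h4, h5⟩ :=
      key P B.card B rfl hB2 hb (by rwa [hBsum])
    have hle := P.le_max' _ h5
    exact ⟨μi, μj, h1, h2, by omega, h3, h4, h5⟩
  · rintro ⟨μi, μj, h1, h2, h3, h4, h5, h6⟩
    refine ⟨μi + μj, h6, {μi, μj}, ?_, ?_, ?_⟩
    · rw [Finset.card_insert_of_notMem (by simp; omega), Finset.card_singleton]
    · intro b hbmem
      rcases Finset.mem_insert.mp hbmem with h | h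
      · exact h ▸ ⟨h2, h4⟩
      · rw [Finset.mem_singleton] at h
        exact h ▸ ⟨by omega, h5⟩
    · rw [Finset.sum_pair (by omega : μi ≠ μj)]; rfl
end

section
/- Let S = {0, s₁, ..., s_n, →} be a numerical set with Frobenius number F(S) (largest gap) and associated Young diagram Y_S under the Keith–Nath transformation. Then the hook length of the cell in the first column and i-th row of Y_S equals the i-th largest gap of S. -/
/-- The `i`-th largest element (0-based) of `P`. -/
def partDesc (P : Finset ℕ) (i : ℕ) : ℕ := ((P.sort (· ≤ ·)).reverse).getD i 0

/-- Length of the `i`-th row (0-based) of the Young diagram obtained from the numerical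
set `ℕ \ P` via the Keith–Nath transformation: the number of east steps (elements of the
numerical set) preceding the north step at the `i`-th largest gap. -/
def knRow (P : Finset ℕ) (i : ℕ) : ℕ :=
  ((Finset.range (partDesc P i)).filter (fun s => s ∉ P)).card

/-- Length of the `j`-th column (0-based) of the Keith–Nath Young diagram. -/
def knCol (P : Finset ℕ) (j : ℕ) : ℕ :=
  ((Finset.range P.card).filter (fun i => j < knRow P i)).card

/-- Hook length of the cell `(i, j)` (0-based) of the Keith–Nath Young diagram:
arm + leg + 1. -/
def knHook (P : Finset ℕ) (i j : ℕ) : ℕ := knRow P i + knCol P j - i - j - 1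

/-- Total number of cells of the Keith–Nath Young diagram. -/
def knCells (P : Finset ℕ) : ℕ := ∑ i ∈ Finset.range P.card, knRow P i

/-- Keith–Nath: the hook length of the cell in the first column and `i`-th row of the
Young diagram of a numerical set `S` equals the `i`-th largest gap of `S`. -/
theorem stmt4 (S : Set ℕ) (h0 : 0 ∈ S) (hfin : (Sᶜ : Set ℕ).Finite)
    (i : ℕ) (hi : i < hfin.toFinset.card) :
    knHook hfin.toFinset i 0 = partDesc hfin.toFinset i := by
  set P := hfin.toFinset with hP
  have h0P : 0 ∉ P := by simp [hP, h0]
  set c := P.card with hc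
  set f := P.orderEmbOfFin rfl with hf
  -- partDesc in terms of orderEmbOfFin
  have hpd : ∀ j, j < c → ∀ h : c - 1 - j < c, partDesc P j = f ⟨c - 1 - j, h⟩ := by
    intro j hj h
    unfold partDesc
    rw [hf, Finset.orderEmbOfFin_apply]
    have hlen : (P.sort (· ≤ ·)).length = c := Finset.length_sort _
    have hj' : j < (P.sort (· ≤ ·)).reverse.length := by
      rw [List.length_reverse, hlen]; exact hj
    rw [List.getD_eq_getElem _ _ hj', List.getElem_reverse]
    congr 1
    simp only [hlen]
  -- elements below f k
  have key : ∀ k (hk : k < c), (P.filter (fun x => x < f ⟨k, hk⟩)).card = k := by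
    intro k hk
    have himg : P.filter (fun x => x < f ⟨k, hk⟩)
        = (Finset.univ.filter (fun j : Fin c => (j : ℕ) < k)).image f := by
      ext x
      simp only [Finset.mem_filter, Finset.mem_image, Finset.mem_univ, true_and]
      constructor
      · rintro ⟨hxP, hxlt⟩
        have : x ∈ Set.range f := by rw [hf, Finset.range_orderEmbOfFin]; exact hxP
        obtain ⟨j, rfl⟩ := this
        refine ⟨j, ?_, rfl⟩
        have := f.lt_iff_lt.mp hxlt
        simpa [Fin.lt_iff_val_lt_val] using this
      · rintro ⟨j, hjk, rfl⟩
        refine ⟨Finset.orderEmbOfFin_mem _ _ _, ?_⟩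
        exact f.lt_iff_lt.mpr (by simpa [Fin.lt_iff_val_lt_val] using hjk)
    rw [himg, Finset.card_image_of_injective _ f.injective]
    have : (Finset.univ.filter (fun j : Fin c => (j : ℕ) < k))
        = (Finset.range k).attachFin (fun m hm => lt_trans (Finset.mem_range.mp hm) hk) := by
      ext j; simp [Finset.mem_attachFin]
    rw [this, Finset.card_attachFin, Finset.card_range]
  -- f k > k
  have hgt : ∀ k (hk : k < c), k < f ⟨k, hk⟩ := by
    intro k
    induction k with
    | zero =>
      intro hk
      have hmem : f ⟨0, hk⟩ ∈ P := Finset.orderEmbOfFin_mem _ _ _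
      rcases Nat.eq_zero_or_pos (f ⟨0, hk⟩) with h | h
      · exact absurd (h ▸ hmem) h0P
      · exact h
    | succ k ih =>
      intro hk
      have hk' : k < c := by omega
      have h1 : f ⟨k, hk'⟩ < f ⟨k + 1, hk⟩ := f.lt_iff_lt.mpr (by simp [Fin.lt_iff_val_lt_val])
      have := ih hk'
      omega
  -- knRow formula for any j < c
  have hrow : ∀ j (hj : j < c), knRow P j + (c - 1 - j) = partDesc P j ∧ c - 1 - j < partDesc P j := by
    intro j hj
    have hcj : c - 1 - j < c := by omega
    have hg := hpd j hj hcj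
    have hbelow : (P.filter (fun x => x < partDesc P j)).card = c - 1 - j := by
      rw [hg]; exact key _ hcj
    have hsplit : ((Finset.range (partDesc P j)).filter (fun s => s ∉ P)).card
        + ((Finset.range (partDesc P j)).filter (fun s => ¬ s ∉ P)).card
        = partDesc P j := by
      rw [Finset.card_filter_add_card_filter_not, Finset.card_range]
    have he : (Finset.range (partDesc P j)).filter (fun s => ¬ s ∉ P)
        = P.filter (fun x => x < partDesc P j) := by
      ext x; simp [Finset.mem_range, and_comm]
    rw [he, hbelow] at hsplit
    have hglt : c - 1 - j < partDesc P j := by rw [hg]; exact hgt _ hcj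
    exact ⟨by unfold knRow; omega, hglt⟩
  -- knCol 0 = c
  have hcol : knCol P 0 = c := by
    unfold knCol
    rw [Finset.filter_true_of_mem, Finset.card_range]
    intro j hj
    have hj' : j < c := Finset.mem_range.mp hj
    obtain ⟨h1, h2⟩ := hrow j hj'
    omega
  obtain ⟨h1, h2⟩ := hrow i hi
  unfold knHook
  rw [hcol]
  omega
end

section
/- Let S be a numerical set with associated Young diagram Y_S under the Keith–Nath transformation. Then S is a numerical semigroup if and only if every hook length occurring in Y_S also occurs as a hook length of some cell in the first column of Y_S (equivalently, every hook length is a gap of S). -/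
/-!
Write `g₀ > g₁ > ⋯` for the gaps and `s₀ < s₁ < ⋯` for the elements of the numerical set `S`.
Row `i` of the Keith–Nath diagram has length `#{j | s_j < g_i}`, so the cell `(i, j)` exists
iff `s_j < g_i`; its arm counts the elements of `S` and its leg the gaps strictly between `s_j`
and `g_i`, hence its hook length is `g_i - s_j`. Since `s₀ = 0`, the first-column hooks are
exactly the gaps. The hook condition thus says that `g - s` is a gap whenever `g` is a gap,
`s ∈ S` and `s < g`, which is additive closure of `S` because `s + (g - s) = g`.
-/

open Finset

section

variable {P : Finset ℕ} {i j x : ℕ}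

theorem partDesc_eq_orderEmbOfFin (hi : i < #P) :
    partDesc P i = P.orderEmbOfFin rfl ⟨#P - 1 - i, by omega⟩ := by
  rw [orderEmbOfFin_apply, partDesc, List.getD_eq_getElem _ _ (by simpa using hi),
    List.getElem_reverse]
  simp

theorem partDesc_mem (hi : i < #P) : partDesc P i ∈ P := by
  rw [partDesc_eq_orderEmbOfFin hi]
  exact orderEmbOfFin_mem ..

theorem partDesc_strictAntiOn : StrictAntiOn (partDesc P) (Set.Iio #P) := by
  intro i hi i' hi' hii'
  rw [partDesc_eq_orderEmbOfFin hi, partDesc_eq_orderEmbOfFin hi']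
  exact (P.orderEmbOfFin rfl).strictMono (Fin.mk_lt_mk.2 (by rw [Set.mem_Iio] at hi'; omega))

theorem exists_partDesc_eq (hx : x ∈ P) : ∃ i < #P, partDesc P i = x := by
  obtain ⟨⟨k, hk⟩, rfl⟩ : x ∈ Set.range (P.orderEmbOfFin rfl) := by
    rwa [range_orderEmbOfFin]
  refine ⟨#P - 1 - k, by omega, ?_⟩
  rw [partDesc_eq_orderEmbOfFin (by omega)]
  congr
  omega

theorem image_partDesc_range : (range #P).image (partDesc P) = P := by
  ext x
  simp only [mem_image, mem_range]
  exact ⟨fun ⟨i, hi, hx⟩ => hx ▸ partDesc_mem hi, exists_partDesc_eq⟩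

theorem card_filter_partDesc (q : ℕ → Prop) [DecidablePred q] :
    #{i ∈ range #P | q (partDesc P i)} = #{y ∈ P | q y} := by
  conv_rhs => rw [← image_partDesc_range (P := P)]
  rw [filter_image, card_image_of_injOn (partDesc_strictAntiOn.injOn.mono ?_)]
  intro i hi
  simpa using (mem_filter.1 hi).1

theorem card_filter_partDesc_le (hi : i < #P) : #{y ∈ P | partDesc P i ≤ y} = i + 1 := by
  rw [← card_filter_partDesc, ← card_range (i + 1)]
  congr 1
  ext i'
  simp only [mem_filter, mem_range]
  constructor
  · rintro ⟨hi', h⟩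
    exact Nat.lt_succ_of_le ((partDesc_strictAntiOn.le_iff_ge hi hi').1 h)
  · intro h
    exact ⟨by omega, (partDesc_strictAntiOn.le_iff_ge hi (Set.mem_Iio.2 (by omega))).2 (by omega)⟩

theorem count_notMem_add_card_filter_lt (x : ℕ) :
    Nat.count (· ∉ P) x + #{y ∈ P | y < x} = x := by
  have : #{y ∈ P | y < x} = #{y ∈ range x | y ∈ P} := by
    congr 1; ext y; simp [and_comm]
  rw [this, Nat.count_eq_card_filter_range, add_comm, card_filter_add_card_filter_not,
    card_range]

theorem card_filter_lt_add_card_filter_lt (hx : x ∉ P) :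
    #{y ∈ P | y < x} + #{y ∈ P | x < y} = #P := by
  rw [← card_filter_add_card_filter_not (s := P) (· < x)]
  congr 2
  refine filter_congr fun y hy => ?_
  have : y ≠ x := ne_of_mem_of_not_mem hy hx
  omega

theorem infinite_setOf_notMem : (Set.ofPred (· ∉ P)).Infinite :=
  P.finite_toSet.infinite_compl

theorem lt_knRow_iff : j < knRow P i ↔ Nat.nth (· ∉ P) j < partDesc P i := by
  rw [knRow, ← Nat.count_eq_card_filter_range]
  exact Nat.lt_nth_iff_count_lt infinite_setOf_notMem

theorem knCol_eq_card_filter : knCol P j = #{y ∈ P | Nat.nth (· ∉ P) j < y} := by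
  rw [knCol, ← card_filter_partDesc (P := P)]
  simp only [lt_knRow_iff]

theorem knHook_eq_sub (hi : i < #P) (hj : j < knRow P i) :
    knHook P i j = partDesc P i - Nat.nth (· ∉ P) j := by
  rw [knHook, knCol_eq_card_filter, knRow, ← Nat.count_eq_card_filter_range]
  set g := partDesc P i
  set s := Nat.nth (· ∉ P) j
  have hsg : s < g := lt_knRow_iff.1 hj
  have hrow : Nat.count (· ∉ P) g + #{y ∈ P | y < g} = g := count_notMem_add_card_filter_lt g
  have hg : #{y ∈ P | y < g} + (i + 1) = #P := by
    rw [← card_filter_partDesc_le hi, ← card_filter_add_card_filter_not (s := P) (· < g)]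
    simp only [not_lt, g]
  have hs : j + #{y ∈ P | y < s} = s := by
    simpa only [s, Nat.count_nth_of_infinite infinite_setOf_notMem] using
      count_notMem_add_card_filter_lt (P := P) s
  have hsplit : #{y ∈ P | y < s} + #{y ∈ P | s < y} = #P :=
    card_filter_lt_add_card_filter_lt (Nat.nth_mem_of_infinite infinite_setOf_notMem j)
  omega

theorem forall_knHook_iff (Q : ℕ → Prop) :
    (∀ i j, i < #P → j < knRow P i → Q (knHook P i j)) ↔
      ∀ g ∈ P, ∀ s ∉ P, s < g → Q (g - s) := by
  constructor
  · intro h g hg s hs hsg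
    obtain ⟨i, hi, rfl⟩ := exists_partDesc_eq hg
    have hj : Nat.count (· ∉ P) s < knRow P i := by
      rwa [lt_knRow_iff, Nat.nth_count (p := (· ∉ P)) hs]
    simpa only [knHook_eq_sub hi hj, Nat.nth_count (p := (· ∉ P)) hs] using h i _ hi hj
  · intro h i j hi hj
    rw [knHook_eq_sub hi hj]
    exact h _ (partDesc_mem hi) _ (Nat.nth_mem_of_infinite infinite_setOf_notMem j)
      (lt_knRow_iff.1 hj)

theorem exists_knHook_zero_eq_iff_mem (h0 : 0 ∉ P) {h : ℕ} :
    (∃ i', i' < #P ∧ 0 < knRow P i' ∧ knHook P i' 0 = h) ↔ h ∈ P := by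
  have hnth : Nat.nth (· ∉ P) 0 = 0 := Nat.nth_zero_of_zero h0
  constructor
  · rintro ⟨i', hi', hpos, rfl⟩
    rw [knHook_eq_sub hi' hpos, hnth, Nat.sub_zero]
    exact partDesc_mem hi'
  · intro hh
    obtain ⟨i', hi', rfl⟩ := exists_partDesc_eq hh
    have hpos : 0 < knRow P i' := by
      rw [lt_knRow_iff, hnth]
      exact Nat.pos_of_ne_zero (ne_of_mem_of_not_mem hh h0)
    exact ⟨i', hi', hpos, by rw [knHook_eq_sub hi' hpos, hnth, Nat.sub_zero]⟩

end

theorem add_closed_iff_sub_notMem (S : Set ℕ) :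
    (∀ a ∈ S, ∀ b ∈ S, a + b ∈ S) ↔ ∀ g ∉ S, ∀ s ∈ S, s < g → g - s ∉ S := by
  constructor
  · intro hS g hg s hs hsg hgs
    exact hg (Nat.add_sub_cancel' hsg.le ▸ hS s hs (g - s) hgs)
  · intro h a ha b hb
    by_contra hab
    obtain rfl | hb0 := b.eq_zero_or_pos
    · exact hab ha
    · exact h _ hab a ha (by omega) (by simpa using hb)

/-- A numerical set is a numerical semigroup iff every hook length of its Keith–Nath
Young diagram occurs as a hook length of some cell of the first column. -/
theorem stmt5 (S : Set ℕ) (h0 : 0 ∈ S) (hfin : (Sᶜ : Set ℕ).Finite) :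
    (∀ a ∈ S, ∀ b ∈ S, a + b ∈ S) ↔
      (∀ i j : ℕ, i < hfin.toFinset.card → j < knRow hfin.toFinset i →
        ∃ i' : ℕ, i' < hfin.toFinset.card ∧ 0 < knRow hfin.toFinset i' ∧
          knHook hfin.toFinset i' 0 = knHook hfin.toFinset i j) := by
  have h0P : 0 ∉ hfin.toFinset := by simpa using h0
  simp only [exists_knHook_zero_eq_iff_mem h0P]
  rw [forall_knHook_iff (· ∈ hfin.toFinset), add_closed_iff_sub_notMem]
  simp
end

section
/- Let λ be an unrefinable partition into distinct parts with largest part λ_t, and let m be the number of its missing parts (positive integers below λ_t absent from λ). Then m ≤ ⌊λ_t/2⌋. -/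
/-! Folding `x ↦ min x (n - x)` sends the missing parts into `[1, n/2]`, where `n` is the
largest part; it is injective because two distinct missing parts with the same image sum to
`n`, and then `{x, n - x}` refines `n`. -/

theorem refinable_of_add_eq {P : Finset ℕ} {a x y : ℕ} (ha : a ∈ P) (hxy : x ≠ y)
    (hx : 0 < x) (hy : 0 < y) (hxP : x ∉ P) (hyP : y ∉ P) (hsum : x + y = a) :
    Refinable P := by
  refine ⟨a, ha, {x, y}, ?_, ?_, ?_⟩
  · rw [Finset.card_pair hxy]
  · intro b hb
    rcases Finset.mem_insert.mp hb with rfl | hb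
    · exact ⟨hx, hxP⟩
    · rw [Finset.mem_singleton.mp hb]; exact ⟨hy, hyP⟩
  · rw [Finset.sum_pair hxy, id, id, hsum]

theorem Finset.card_le_half_of_forall_add_ne {S : Finset ℕ} {n : ℕ} (hS : S ⊆ Finset.Icc 1 n)
    (hn : n ∉ S) (hpair : ∀ x ∈ S, ∀ y ∈ S, x ≠ y → x + y ≠ n) :
    S.card ≤ n / 2 := by
  have hmem : ∀ x ∈ S, 1 ≤ x ∧ x < n := fun x hx =>
    have := Finset.mem_Icc.mp (hS hx)
    ⟨this.1, lt_of_le_of_ne this.2 fun h => hn (h ▸ hx)⟩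
  calc S.card ≤ (Finset.Icc 1 (n / 2)).card := by
        apply Finset.card_le_card_of_injOn (fun x => min x (n - x))
        · intro x hx
          have := hmem x hx
          simp only [Finset.coe_Icc, Set.mem_Icc]
          omega
        · intro x hx y hy hfold
          by_contra hxy
          have := hmem x hx
          have := hmem y hy
          exact hpair x hx y hy hxy (by simp only at hfold; omega)
    _ = n / 2 := by simp

theorem stmt7_general (P : Finset ℕ) (hne : P.Nonempty) (hunref : ¬ Refinable P) :
    ((Finset.Icc 1 (P.max' hne)) \ P).card ≤ P.max' hne / 2 := by
  have hmax : P.max' hne ∈ P := P.max'_mem hne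
  apply Finset.card_le_half_of_forall_add_ne Finset.sdiff_subset
  · exact fun h => (Finset.mem_sdiff.mp h).2 hmax
  · intro x hx y hy hxy hsum
    obtain ⟨hxI, hxP⟩ := Finset.mem_sdiff.mp hx
    obtain ⟨hyI, hyP⟩ := Finset.mem_sdiff.mp hy
    exact hunref <| refinable_of_add_eq hmax hxy (Finset.mem_Icc.mp hxI).1
      (Finset.mem_Icc.mp hyI).1 hxP hyP hsum

/-- An unrefinable partition with largest part `λ_t` has at most `⌊λ_t / 2⌋` missing
parts. -/
theorem stmt7 (P : Finset ℕ) (hne : P.Nonempty) (hpos : ∀ p ∈ P, 0 < p)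
    (hcard : 2 ≤ P.card) (hunref : ¬ Refinable P) :
    ((Finset.Icc 1 (P.max' hne)) \ P).card ≤ P.max' hne / 2 :=
  stmt7_general P hne hunref
end

section
/- Let λ be an unrefinable partition into distinct parts whose largest part λ_t is odd, say λ_t = 2q−1, and suppose λ has exactly q−1 missing parts (the maximal possible number, ⌊λ_t/2⌋) and q parts. Then for every positive integer x < λ_t: x is a part of λ if and only if λ_t − x is not a part of λ. -/
/-- An unrefinable partition with odd largest part `2q - 1`, `q` parts and the maximal
number `q - 1` of missing parts satisfies the complement property: for `0 < x < λ_t`,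
`x` is a part iff `λ_t - x` is not a part. -/
theorem stmt8 (P : Finset ℕ) (q : ℕ) (hne : P.Nonempty) (hpos : ∀ p ∈ P, 0 < p)
    (hcard2 : 2 ≤ P.card) (hunref : ¬ Refinable P)
    (hmax : P.max' hne = 2 * q - 1) (hparts : P.card = q)
    (hmiss : ((Finset.Icc 1 (P.max' hne)) \ P).card = q - 1) :
    ∀ x : ℕ, 0 < x → x < P.max' hne → (x ∈ P ↔ P.max' hne - x ∉ P) := by
  set M := P.max' hne with hM
  have hMmem : M ∈ P := P.max'_mem hne
  have hq2 : 2 ≤ q := by rw [← hparts]; exact hcard2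
  have hMeq : M = 2 * q - 1 := hmax
  have hle : ∀ p ∈ P, p ≤ M := fun p hp => P.le_max' p hp
  -- key: missing parts μ < M have complement in P
  have key : ∀ μ, 0 < μ → μ < M → μ ∉ P → M - μ ∈ P := by
    intro μ h1 h2 h3
    by_contra h4
    apply hunref
    have hne' : μ ≠ M - μ := by omega
    refine ⟨M, hMmem, {μ, M - μ}, ?_, ?_, ?_⟩
    · rw [Finset.card_insert_of_notMem (by simpa using hne'), Finset.card_singleton]
    · intro b hb
      rcases Finset.mem_insert.mp hb with rfl | hb
      · exact ⟨h1, h3⟩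
      · rw [Finset.mem_singleton] at hb; subst hb
        exact ⟨by omega, h4⟩
    · rw [Finset.sum_pair hne']; simp; omega
  -- counting argument
  set S := P.erase M with hS
  have hScard : S.card = q - 1 := by
    rw [hS, Finset.card_erase_of_mem hMmem, hparts]
  set F : ℕ → ℕ := fun i => if i ∈ P then i else M - i with hF
  have hFmem : ∀ i ∈ Finset.Icc 1 (q - 1), F i ∈ S := by
    intro i hi
    rw [Finset.mem_Icc] at hi
    rw [hF]
    by_cases h : i ∈ P
    · simp only [h, if_true]
      exact Finset.mem_erase.mpr ⟨by omega, h⟩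
    · simp only [h, if_false]
      exact Finset.mem_erase.mpr ⟨by omega, key i (by omega) (by omega) h⟩
  have hFinj : Set.InjOn F (Finset.Icc 1 (q - 1)) := by
    intro i hi j hj hij
    simp only [Finset.coe_Icc, Set.mem_Icc] at hi hj
    rw [hF] at hij
    simp only at hij
    split_ifs at hij <;> omega
  have himg : (Finset.Icc 1 (q - 1)).image F = S := by
    apply Finset.eq_of_subset_of_card_le
    · intro y hy
      rcases Finset.mem_image.mp hy with ⟨i, hi, rfl⟩
      exact hFmem i hi
    · rw [Finset.card_image_of_injOn hFinj, hScard, Nat.card_Icc]; omega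
  -- exactly one per pair
  have contra : ∀ a, 0 < a → a ≤ q - 1 → a ∈ P → M - a ∈ P → False := by
    intro a h1 h2 haP hbP
    have hbS : M - a ∈ S := Finset.mem_erase.mpr ⟨by omega, hbP⟩
    rw [← himg] at hbS
    rcases Finset.mem_image.mp hbS with ⟨j, hj, hFj⟩
    rw [Finset.mem_Icc] at hj
    rw [hF] at hFj
    simp only at hFj
    split_ifs at hFj with h
    · omega
    · have : j = a := by omega
      subst this; exact h haP
  intro x hx hxM
  constructor
  · intro hxP hcP
    by_cases h : x ≤ q - 1
    · exact contra x hx h hxP hcP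
    · have hx' : M - (M - x) = x := by omega
      exact contra (M - x) (by omega) (by omega) hcP (by rwa [hx'])
  · intro h
    by_contra hxP
    have := key x hx hxM hxP
    exact h this
end

section
/- Let λ be an unrefinable partition with λ_t = 2n−4 for some n ≥ 6, exactly n−2 parts, and exactly n−2 missing parts, such that n−2 is not a part of λ and for all x ≠ n−2 with 1 ≤ x ≤ 2n−4, x ∈ λ iff 2n−4 − x ∉ λ. Then the total number of cells of the Young diagram KN(S_λ) equals 3n − 3. -/
/-! The `i`-th row of the Keith–Nath diagram ends at the `i`-th largest part `p`, and the
numbers below `p` are split into gaps (the cells of the row) and smaller parts, so the row has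
`p - #{q ∈ P | q < p}` cells. Summed over all parts, the subtracted counts give `C(#P, 2)`;
hence the diagram has `∑ P - C(#P, 2)` cells, which for weight `T_n` and `n - 2` parts is
`T_n - T_{n-3} = 3n - 3`. -/

open Finset

lemma sum_map_sort (P : Finset ℕ) (f : ℕ → ℕ) :
    ((P.sort (· ≤ ·)).map f).sum = ∑ p ∈ P, f p := by
  rw [((P.sort_perm_toList _).map f).sum_eq, sum_map_toList]

lemma knCells_eq_sum (P : Finset ℕ) :
    knCells P = ∑ p ∈ P, #((range p).filter (· ∉ P)) := by
  set L := (P.sort (· ≤ ·)).reverse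
  have hL : P.card = L.length := by simp [L]
  rw [knCells, hL, sum_range, ← sum_map_sort, ← List.sum_reverse, ← List.map_reverse,
    ← Fin.sum_univ_fun_getElem]
  refine Fintype.sum_congr _ _ fun i => ?_
  rw [knRow, partDesc, List.getD_eq_getElem _ _ i.isLt]

lemma card_filter_notMem_range_add_card_filter_lt (P : Finset ℕ) (p : ℕ) :
    #((range p).filter (· ∉ P)) + #(P.filter (· < p)) = p := by
  conv_rhs => rw [← card_range p, ← (range p).card_filter_add_card_filter_not (· ∉ P)]
  congr 2
  ext x
  simp only [mem_filter, mem_range, not_not]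
  tauto

lemma sum_card_filter_lt_eq_choose_two (P : Finset ℕ) :
    ∑ p ∈ P, #(P.filter (· < p)) = P.card.choose 2 := by
  induction P using Finset.induction_on_max with
  | empty => simp
  | insert a s has ih =>
    have hnot : a ∉ s := fun h => lt_irrefl a (has a h)
    rw [sum_insert hnot, card_insert_of_notMem hnot, Nat.choose_succ_succ', Nat.choose_one_right,
      ← ih]
    congr 1
    · rw [filter_insert, if_neg (lt_irrefl a), filter_true_of_mem has]
    · refine sum_congr rfl fun p hp => congr_arg card ?_
      rw [filter_insert, if_neg (not_lt.2 (has p hp).le)]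

theorem knCells_add_choose_card (P : Finset ℕ) :
    knCells P + P.card.choose 2 = ∑ p ∈ P, p := by
  rw [knCells_eq_sum, ← sum_card_filter_lt_eq_choose_two, ← sum_add_distrib]
  exact sum_congr rfl fun p _ => card_filter_notMem_range_add_card_filter_lt P p

theorem stmt9_general (P : Finset ℕ) (n : ℕ)
    (hsum : P.sum id = n * (n + 1) / 2)
    (hcard : P.card = n - 2) :
    knCells P = 3 * n - 3 := by
  have hcells := knCells_add_choose_card P
  rw [show ∑ p ∈ P, p = P.sum id from rfl, hsum, hcard, Nat.choose_two_right] at hcells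
  rcases n with _ | _ | m
  · omega
  · rw [card_eq_zero.1 hcard] at hsum
    simp at hsum
  · have hsq : (m + 2) * (m + 2 + 1) = m * (m - 1) + 2 * (3 * m + 3) := by
      rcases m with _ | m
      · rfl
      · simp only [Nat.add_sub_cancel]
        ring
    rw [hsq, Nat.add_mul_div_left _ _ two_pos, show m + 1 + 1 - 2 = m from rfl] at hcells
    omega

/-- A maximal unrefinable partition of triangular weight `T_n` (largest part `2n-4`,
`n-2` parts, `n-2` missing parts, complement property) has a Keith–Nath Young diagram
with exactly `3n - 3` cells. -/
theorem stmt9 (P : Finset ℕ) (n : ℕ) (hn : 6 ≤ n) (hne : P.Nonempty)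
    (hpos : ∀ p ∈ P, 0 < p) (hunref : ¬ Refinable P)
    (hsum : P.sum id = n * (n + 1) / 2)
    (hmax : P.max' hne = 2 * n - 4) (hcard : P.card = n - 2)
    (hmiss : ((Finset.Icc 1 (P.max' hne)) \ P).card = n - 2)
    (hnmem : n - 2 ∉ P)
    (hcompl : ∀ x : ℕ, 0 < x → x ≤ 2 * n - 4 → x ≠ n - 2 →
      (x ∈ P ↔ 2 * n - 4 - x ∉ P)) :
    knCells P = 3 * n - 3 :=
  stmt9_general P n hsum hcard
end

section
/- Let n = 2k−1 be odd, and let λ be a maximal unrefinable partition of T_n = n(n+1)/2 with largest part 2n−4, n−2 parts, n−2 missing parts, satisfying the complement property (x ∈ λ iff 2n−4−x ∉ λ for x ≠ n−2, and n−2 ∉ λ). In the associated Young diagram Y = KN(S_λ), let z be the index with h_{1,z+1} = n−2. Then the sum of the hook lengths h_{i,z+1} for 2 ≤ i ≤ z (the entries of the 'extra column' below the first row) equals k. -/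
/-!
Put `m = n - 2 = #λ`. The `i`-th row of the Keith–Nath diagram counts the gaps below the
`i`-th largest part `λ_i`, so it equals `λ_i - (#λ - 1 - i)`. The hypothesis `h_{0,z} = n - 2`
says that column `z` has length `z`; then the rows `i < z` are exactly those of the parts
larger than `m`, and `h_{i,z} = λ_i - m` for them. The complement property pairs every gap
`x < m` with the part `2m - x`, whence `∑ λ = ∑_{x<m} x + 2 ∑_{λ_i > m} (λ_i - m)`. With
`∑ λ = k(2k - 1)` and `m = 2k - 3` this gives `∑_{λ_i > m} (λ_i - m) = 3k - 3`, and dropping the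
first row, which contributes `2m - m = 2k - 3`, leaves `k`.
-/

open Finset

namespace KeithNath

variable (P : Finset ℕ)

lemma length_sort_reverse : ((P.sort (· ≤ ·)).reverse).length = P.card := by
  rw [List.length_reverse, Finset.length_sort]

lemma partDesc_mem {i : ℕ} (hi : i < P.card) : partDesc P i ∈ P := by
  rw [partDesc, List.getD_eq_getElem _ _ (by rwa [length_sort_reverse])]
  exact List.mem_reverse.mp (List.getElem_mem _) |> (Finset.mem_sort _).mp

lemma partDesc_lt_partDesc {i j : ℕ} (hij : i < j) (hj : j < P.card) :
    partDesc P j < partDesc P i := by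
  have hsorted := List.pairwise_reverse.mpr (Finset.sortedLT_sort P).pairwise
  have hl := length_sort_reverse P
  rw [partDesc, partDesc, List.getD_eq_getElem _ _ (show j < _ by omega),
    List.getD_eq_getElem _ _ (show i < _ by omega)]
  exact hsorted.rel_get_of_lt (a := ⟨i, by omega⟩) (b := ⟨j, by omega⟩) hij

lemma exists_partDesc_eq {p : ℕ} (hp : p ∈ P) : ∃ i < P.card, partDesc P i = p := by
  obtain ⟨i, hi⟩ := List.mem_iff_get.mp
    (List.mem_reverse.mpr ((Finset.mem_sort (· ≤ ·)).mpr hp))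
  refine ⟨i, length_sort_reverse P ▸ i.2, ?_⟩
  rw [partDesc, List.getD_eq_getElem _ _ i.2]
  exact hi

lemma injOn_partDesc : Set.InjOn (partDesc P) (range P.card) := by
  intro i hi j hj h
  simp only [coe_range, Set.mem_Iio] at hi hj
  by_contra hne
  rcases Nat.lt_or_gt_of_ne hne with hij | hji
  · exact (partDesc_lt_partDesc P hij hj).ne' h
  · exact (partDesc_lt_partDesc P hji hi).ne h

lemma partDesc_zero (hne : P.Nonempty) : partDesc P 0 = P.max' hne := by
  have hpos : 0 < P.card := hne.card_pos
  refine le_antisymm (P.le_max' _ (partDesc_mem P hpos)) (P.max'_le hne _ fun p hp => ?_)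
  obtain ⟨i, hi, rfl⟩ := exists_partDesc_eq P hp
  rcases i.eq_zero_or_pos with rfl | hi0
  · exact le_rfl
  · exact (partDesc_lt_partDesc P hi0 hi).le

lemma filter_lt_partDesc {i : ℕ} (hi : i < P.card) :
    P.filter (· < partDesc P i) = (Ioo i P.card).image (partDesc P) := by
  ext p
  simp only [mem_filter, mem_image, mem_Ioo]
  constructor
  · rintro ⟨hp, hlt⟩
    obtain ⟨j, hj, rfl⟩ := exists_partDesc_eq P hp
    refine ⟨j, ⟨?_, hj⟩, rfl⟩
    by_contra! hji
    rcases hji.eq_or_lt with rfl | hji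
    · exact hlt.false
    · exact (partDesc_lt_partDesc P hji hi).not_gt hlt
  · rintro ⟨j, ⟨hij, hj⟩, rfl⟩
    exact ⟨partDesc_mem P hj, partDesc_lt_partDesc P hij hj⟩

lemma knRow_add {i : ℕ} (hi : i < P.card) : knRow P i + (P.card - 1 - i) = partDesc P i := by
  have hparts : ((range (partDesc P i)).filter (· ∈ P)).card = P.card - 1 - i := by
    have hset : (range (partDesc P i)).filter (· ∈ P) = P.filter (· < partDesc P i) := by
      ext p; simp only [mem_filter, mem_range]; tauto
    have hinj : Set.InjOn (partDesc P) (Ioo i P.card) :=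
      (injOn_partDesc P).mono (coe_subset.mpr fun j hj => mem_range.mpr (mem_Ioo.mp hj).2)
    rw [hset, filter_lt_partDesc P hi, card_image_of_injOn hinj, Nat.card_Ioo]
    omega
  rw [knRow, ← hparts, add_comm, card_filter_add_card_filter_not, card_range]

lemma knRow_le_knRow {i j : ℕ} (hij : i ≤ j) (hj : j < P.card) : knRow P j ≤ knRow P i := by
  have hle : partDesc P j ≤ partDesc P i := by
    rcases hij.eq_or_lt with rfl | hij
    · exact le_rfl
    · exact (partDesc_lt_partDesc P hij hj).le
  exact card_le_card (filter_subset_filter _ (range_subset_range.mpr hle))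

lemma knCol_le_card (j : ℕ) : knCol P j ≤ P.card :=
  (card_filter_le _ _).trans (card_range _).le

lemma lt_knCol_iff {i j : ℕ} (hi : i < P.card) : i < knCol P j ↔ j < knRow P i := by
  constructor
  · intro hcol
    by_contra! hrow
    have hsub : (range P.card).filter (fun i' => j < knRow P i') ⊆ range i := by
      intro i' hi'
      simp only [mem_filter, mem_range] at hi' ⊢
      by_contra! hii'
      exact ((knRow_le_knRow P hii' hi'.1).trans hrow).not_gt hi'.2
    have := card_le_card hsub
    rw [card_range] at this
    exact (hcol.trans_le this).false
  · intro hrow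
    have hsub : range (i + 1) ⊆ (range P.card).filter (fun i' => j < knRow P i') := by
      intro i' hi'
      simp only [mem_filter, mem_range] at hi' ⊢
      exact ⟨by omega, hrow.trans_le (knRow_le_knRow P (Nat.lt_succ_iff.mp hi') hi)⟩
    have := card_le_card hsub
    rw [card_range] at this
    exact this

variable {P} {z : ℕ}

lemma card_lt_partDesc_iff_of_knCol_eq (hz : knCol P z = z) {i : ℕ} (hi : i < P.card) :
    P.card < partDesc P i ↔ i < z := by
  have hcol := lt_knCol_iff P (j := z) hi
  rw [hz] at hcol
  have := knRow_add P hi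
  omega

lemma knHook_eq_of_knCol_eq (hz : knCol P z = z) {i : ℕ} (hi : i < z) :
    knHook P i z = partDesc P i - P.card := by
  have hiP : i < P.card := hi.trans_le (hz ▸ knCol_le_card P z)
  have hrow := (lt_knCol_iff P (j := z) hiP).mp (by rwa [hz])
  have := knRow_add P hiP
  rw [knHook, hz]
  omega

lemma sum_knHook_of_knCol_eq (hz : knCol P z = z) :
    ∑ i ∈ range z, knHook P i z = ∑ p ∈ P.filter (P.card < ·), (p - P.card) := by
  have hzP : z ≤ P.card := hz ▸ knCol_le_card P z
  have himage : P.filter (P.card < ·) = (range z).image (partDesc P) := by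
    ext p
    simp only [mem_filter, mem_image, mem_range]
    constructor
    · rintro ⟨hp, hlt⟩
      obtain ⟨i, hi, rfl⟩ := exists_partDesc_eq P hp
      exact ⟨i, (card_lt_partDesc_iff_of_knCol_eq hz hi).mp hlt, rfl⟩
    · rintro ⟨i, hi, rfl⟩
      have hiP : i < P.card := hi.trans_le hzP
      exact ⟨partDesc_mem P hiP, (card_lt_partDesc_iff_of_knCol_eq hz hiP).mpr hi⟩
  have hinj : Set.InjOn (partDesc P) (range z) :=
    (injOn_partDesc P).mono (coe_subset.mpr (range_subset_range.mpr hzP))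
  rw [himage, sum_image hinj]
  exact sum_congr rfl fun i hi => knHook_eq_of_knCol_eq hz (mem_range.mp hi)

end KeithNath

lemma sum_eq_of_mem_iff_reflect_notMem (P : Finset ℕ) (m : ℕ) (hle : ∀ p ∈ P, p ≤ 2 * m)
    (hm : m ∉ P) (hrefl : ∀ x < m, x ∈ P ↔ 2 * m - x ∉ P) :
    ∑ p ∈ P, p = ∑ x ∈ range m, x + 2 * ∑ p ∈ P.filter (m < ·), (p - m) := by
  set D := (range m).filter (· ∉ P)
  have hupper : P.filter (m < ·) = D.image (2 * m - ·) := by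
    ext p
    simp only [D, mem_filter, mem_image, mem_range]
    constructor
    · rintro ⟨hp, hmp⟩
      have hpm := hle p hp
      refine ⟨2 * m - p, ⟨by omega, ?_⟩, by omega⟩
      rw [hrefl _ (by omega), show 2 * m - (2 * m - p) = p by omega]
      exact not_not.mpr hp
    · rintro ⟨x, ⟨hx, hxP⟩, rfl⟩
      exact ⟨not_not.mp ((hrefl x hx).not.mp hxP), by omega⟩
  have hinj : Set.InjOn (2 * m - ·) D := by
    intro x hx y hy hxy
    simp only [D, coe_filter, mem_range, Set.mem_ofPred_eq] at hx hy hxy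
    omega
  have hlower : P.filter (¬ m < ·) = (range m).filter (· ∈ P) := by
    ext p
    simp only [mem_filter, mem_range, not_lt]
    constructor
    · rintro ⟨hp, hpm⟩
      exact ⟨lt_of_le_of_ne hpm fun h => hm (h ▸ hp), hp⟩
    · rintro ⟨hpm, hp⟩
      exact ⟨hp, hpm.le⟩
  have hreflect : ∑ x ∈ D, (2 * m - x) = ∑ x ∈ D, x + 2 * ∑ x ∈ D, (m - x) := by
    rw [mul_sum, ← sum_add_distrib]
    refine sum_congr rfl fun x hx => ?_
    simp only [D, mem_filter, mem_range] at hx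
    omega
  rw [← sum_filter_add_sum_filter_not P (m < ·), hupper, sum_image hinj, sum_image hinj,
    hlower, ← sum_filter_add_sum_filter_not (range m) (· ∈ P), hreflect]
  have hsub : ∑ x ∈ D, (2 * m - x - m) = ∑ x ∈ D, (m - x) :=
    sum_congr rfl fun x _ => by omega
  rw [hsub]
  ring

theorem stmt10_general (P : Finset ℕ) (n k z : ℕ) (hn : n = 2 * k - 1)
    (hne : P.Nonempty) (hpos : ∀ p ∈ P, 0 < p)
    (hsum : P.sum id = n * (n + 1) / 2)
    (hmax : P.max' hne = 2 * n - 4) (hcard : P.card = n - 2)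
    (hnmem : n - 2 ∉ P)
    (hcompl : ∀ x : ℕ, 0 < x → x ≤ 2 * n - 4 → x ≠ n - 2 →
      (x ∈ P ↔ 2 * n - 4 - x ∉ P))
    (hz1 : 1 ≤ z) (hz : knHook P 0 z = n - 2) :
    ∑ i ∈ Finset.Ico 1 z, knHook P i z = k := by
  have hcard_pos := hne.card_pos
  have hrow0 : knRow P 0 = n - 1 := by
    have := KeithNath.knRow_add P hcard_pos
    rw [KeithNath.partDesc_zero P hne, hmax] at this
    omega
  have hcol : knCol P z = z := by
    rw [knHook, hrow0] at hz
    omega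
  have hhooks := KeithNath.sum_knHook_of_knCol_eq hcol
  rw [sum_range_eq_add_Ico _ hz1, hz, hcard] at hhooks
  have hreflect : ∀ x < n - 2, x ∈ P ↔ 2 * (n - 2) - x ∉ P := by
    intro x hx
    rcases x.eq_zero_or_pos with rfl | hx0
    · have hmem : 2 * (n - 2) - 0 ∈ P := by
        rw [show 2 * (n - 2) - 0 = P.max' hne by omega]
        exact P.max'_mem hne
      exact iff_of_false (fun h => (hpos 0 h).false) (not_not.mpr hmem)
    · rw [hcompl x hx0 (by omega) (by omega), show 2 * n - 4 - x = 2 * (n - 2) - x by omega]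
  have hparts := sum_eq_of_mem_iff_reflect_notMem P (n - 2)
    (fun p hp => by have := P.le_max' p hp; omega) hnmem hreflect
  have hgauss := sum_range_id_mul_two (n - 2)
  change ∑ p ∈ P, p = _ at hsum
  obtain ⟨j, rfl⟩ : ∃ j, k = j + 2 := ⟨k - 2, by omega⟩
  obtain rfl : n = 2 * j + 3 := by omega
  rw [Nat.div_eq_of_eq_mul_left two_pos (show _ = (2 * j + 3) * (j + 2) * 2 by ring)] at hsum
  rw [show 2 * j + 3 - 2 = 2 * j + 1 by omega] at hhooks hparts hgauss
  rw [show 2 * j + 1 - 1 = 2 * j by omega] at hgauss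
  linarith

/-- Triangular case, `n = 2k - 1` odd: in the Keith–Nath Young diagram of a maximal
unrefinable partition of `T_n`, the hook lengths of the extra column (column `z`,
0-based, where `h_{0,z} = n - 2`) below the first row sum to `k`. -/
theorem stmt10 (P : Finset ℕ) (n k z : ℕ) (hk : 4 ≤ k) (hn : n = 2 * k - 1)
    (hne : P.Nonempty) (hpos : ∀ p ∈ P, 0 < p) (hunref : ¬ Refinable P)
    (hsum : P.sum id = n * (n + 1) / 2)
    (hmax : P.max' hne = 2 * n - 4) (hcard : P.card = n - 2)
    (hmiss : ((Finset.Icc 1 (P.max' hne)) \ P).card = n - 2)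
    (hnmem : n - 2 ∉ P)
    (hcompl : ∀ x : ℕ, 0 < x → x ≤ 2 * n - 4 → x ≠ n - 2 →
      (x ∈ P ↔ 2 * n - 4 - x ∉ P))
    (hz1 : 1 ≤ z) (hz2 : z ≤ n - 2) (hz : knHook P 0 z = n - 2) :
    ∑ i ∈ Finset.Ico 1 z, knHook P i z = k :=
  stmt10_general P n k z hn hne hpos hsum hmax hcard hnmem hcompl hz1 hz
end

section
/- Let n = 2k−1 with k ≥ 4, and let η = (η₁ < ... < η_l) be a partition of k into distinct parts with η ≠ (3, k−3). Then there is no index pair and part decomposition giving n−2 = η_a + 2η_b with η_a, η_b distinct parts of η. More precisely: if η_a + 2η_b = n − 2 = 2k − 3 for parts η_a ≠ η_b of η, then η_a ≤ 3, and each case η_a ∈ {1, 2, 3} leads to a contradiction (η = (1,1,k−2) not distinct, η_b non-integral, or η = (3,k−3) excluded, respectively). -/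
/-- Key arithmetic fact for the triangular case: if `η` is a partition of `k` into
distinct parts, `k ≥ 4`, `n = 2k - 1`, and `η ≠ (3, k-3)`, then no two distinct parts
`a ≠ b` of `η` satisfy `a + 2b = n - 2`. -/
theorem stmt15 (k n : ℕ) (hk : 4 ≤ k) (hn : n = 2 * k - 1) (η : Finset ℕ)
    (hpos : ∀ x ∈ η, 0 < x) (hsum : η.sum id = k)
    (hex : η ≠ ({3, k - 3} : Finset ℕ)) :
    ∀ a ∈ η, ∀ b ∈ η, a ≠ b → a + 2 * b ≠ n - 2 := by
  intro a ha b hb hab heq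
  have hsub : ({a, b} : Finset ℕ) ⊆ η := by
    intro x hx
    simp only [Finset.mem_insert, Finset.mem_singleton] at hx
    rcases hx with rfl | rfl <;> assumption
  have hpair : ({a, b} : Finset ℕ).sum id = a + b := Finset.sum_pair hab
  have hle : a + b ≤ k := by
    rw [← hpair, ← hsum]
    exact Finset.sum_le_sum_of_subset hsub
  have hapos : 0 < a := hpos a ha
  have h1 : a + 2 * b = 2 * k - 3 := by omega
  have hrest := Finset.sum_sdiff (f := id) hsub
  rw [hpair, hsum] at hrest
  set m := (η \ ({a, b} : Finset ℕ)).sum id with hm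
  -- hrest : m + (a + b) = k
  have hodd : a = 1 ∨ a = 3 := by omega
  rcases hodd with rfl | rfl
  · -- a = 1, b = k - 2, rest sums to 1
    have hs1 : m = 1 := by omega
    have hne : (η \ ({1, b} : Finset ℕ)).Nonempty := by
      rw [Finset.nonempty_iff_ne_empty]
      intro h
      rw [hm, h, Finset.sum_empty] at hs1
      omega
    obtain ⟨c, hc⟩ := hne
    have hcη : c ∈ η := (Finset.mem_sdiff.mp hc).1
    have hcne : c ∉ ({1, b} : Finset ℕ) := (Finset.mem_sdiff.mp hc).2
    have hcle : c ≤ 1 := by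
      calc c = id c := rfl
        _ ≤ (η \ ({1, b} : Finset ℕ)).sum id :=
          Finset.single_le_sum (fun i _ => Nat.zero_le (id i)) hc
        _ = 1 := by rw [← hm]; exact hs1
    have : c = 1 := le_antisymm hcle (hpos c hcη)
    exact hcne (by simp [this])
  · -- a = 3, b = k - 3, rest sums to 0
    have hb3 : b = k - 3 := by omega
    have hs0 : (η \ ({3, b} : Finset ℕ)).sum id = 0 := by rw [← hm]; omega
    have hempty : η \ ({3, b} : Finset ℕ) = ∅ := by
      rw [Finset.eq_empty_iff_forall_notMem]
      intro c hc
      have hcη : c ∈ η := (Finset.mem_sdiff.mp hc).1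
      have hzero := (Finset.sum_eq_zero_iff.mp hs0) c hc
      exact (Nat.pos_iff_ne_zero.mp (hpos c hcη)) hzero
    apply hex
    apply Finset.Subset.antisymm
    · intro x hx
      by_contra hx3
      have hmem : x ∈ η \ ({3, b} : Finset ℕ) := Finset.mem_sdiff.mpr ⟨hx, by
        rw [hb3]; exact hx3⟩
      rw [hempty] at hmem
      exact Finset.notMem_empty x hmem
    · rw [← hb3]; exact hsub
end
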